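/- arXiv:1602.04561 — 3 statements merged into one kernel-verified Lean document; each statement's English description precedes it below -/
import Mathlib

section
/- Let μ be the product over σ ∈ E of the uniform probability measure on [0,1] ⊂ ℝ, and for ω ∈ [0,1]^E define L(ω) = ∫₀¹ (κ − r({σ ∈ E : ω(σ) ≤ s})) ds, the lifetime sum of the (ℓ−1)-st reduced persistent homology of the ℓ-Bernoulli cell complex process on X. Then ∫ L dμ = ∫₀¹ ((1−t)/t) · T_x(1/t, 1/(1−t)) / T(1/t, 1/(1−t)) dt. -/
/-!
At time `s` the random set `{σ | ω σ ≤ s}` contains each cell independently with probability `s`,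
so after exchanging the expectation with the time integral (Fubini) the left-hand side is
`∫₀¹ ∑_F (κ - r F) s^|F| (1 - s)^(n - |F|) ds`.
At `x = 1/t`, `y = 1/(1 - t)` one has `(x - 1)(y - 1) = 1`, so every monomial of `T` collapses to
`((1 - t)/t)^κ (1 - t)^(-n)` times the binomial weight `t^|F| (1 - t)^(n - |F|)`, and those of
`(x - 1) T_x` carry the extra factor `κ - r F`. The weights sum to `1`, hence
`(x - 1) T_x / T` is exactly the integrand above.
-/

open Finset MeasureTheory

theorem pow_tsub_mul_pow_tsub_of_mul_eq_one {M : Type*} [CommMonoid M] {a b : M}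
    (hab : a * b = 1) {i j k : ℕ} (hki : k ≤ i) (hkj : k ≤ j) :
    a ^ (i - k) * b ^ (j - k) = a ^ i * b ^ j := by
  calc a ^ (i - k) * b ^ (j - k) = a ^ (i - k) * b ^ (j - k) * (a * b) ^ k := by
        rw [hab, one_pow, mul_one]
    _ = a ^ i * b ^ j := by
        rw [mul_pow, mul_mul_mul_comm, ← pow_add, ← pow_add, tsub_add_cancel_of_le hki,
          tsub_add_cancel_of_le hkj]

theorem natCast_mul_pow_sub_one_mul {R : Type*} [Semiring R] (m : ℕ) (a : R) :
    (m : R) * a ^ (m - 1) * a = m * a ^ m := by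
  rcases m with _ | m
  · simp
  · rw [mul_assoc, add_tsub_cancel_right, ← pow_succ]

section Tutte

variable {𝕜 : Type*} [Field 𝕜] {t : 𝕜}

theorem tutte_term_at_inv_eq (ht₀ : t ≠ 0) (ht₁ : 1 - t ≠ 0) {κ r k n : ℕ}
    (hrκ : r ≤ κ) (hrk : r ≤ k) (hkn : k ≤ n) :
    (1 / t - 1) ^ (κ - r) * (1 / (1 - t) - 1) ^ (k - r) =
      ((1 - t) / t) ^ κ / (1 - t) ^ n * (t ^ k * (1 - t) ^ (n - k)) := by
  have hx : 1 / t - 1 = (1 - t) / t := by field_simp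
  have hy : 1 / (1 - t) - 1 = t / (1 - t) := by field_simp; ring
  have hxy : (1 - t) / t * (t / (1 - t)) = 1 := by field_simp
  rw [hx, hy, pow_tsub_mul_pow_tsub_of_mul_eq_one hxy hrκ hrk, div_pow t,
    ← tsub_add_cancel_of_le hkn, pow_add, add_tsub_cancel_right]
  field_simp

theorem tutte_ratio_eq_sum {E : Type*} [Fintype E] (r : Finset E → ℕ) (κ : ℕ)
    (hrκ : ∀ F, r F ≤ κ) (hrc : ∀ F, r F ≤ #F) (ht₀ : t ≠ 0) (ht₁ : 1 - t ≠ 0) :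
    (1 - t) / t * (∑ F : Finset E, ((κ - r F : ℕ) : 𝕜) * (1 / t - 1) ^ (κ - r F - 1) *
        (1 / (1 - t) - 1) ^ (#F - r F)) /
      (∑ F : Finset E, (1 / t - 1) ^ (κ - r F) * (1 / (1 - t) - 1) ^ (#F - r F)) =
      ∑ F : Finset E, ((κ - r F : ℕ) : 𝕜) * (t ^ #F * (1 - t) ^ (Fintype.card E - #F)) := by
  have hterm (F : Finset E) := tutte_term_at_inv_eq ht₀ ht₁ (hrκ F) (hrc F) (card_le_univ F)
  have hx : (1 - t) / t = 1 / t - 1 := by field_simp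
  have hTx : (1 - t) / t * ∑ F : Finset E, ((κ - r F : ℕ) : 𝕜) * (1 / t - 1) ^ (κ - r F - 1) *
      (1 / (1 - t) - 1) ^ (#F - r F) =
      ∑ F : Finset E, ((κ - r F : ℕ) : 𝕜) *
        ((1 / t - 1) ^ (κ - r F) * (1 / (1 - t) - 1) ^ (#F - r F)) := by
    rw [hx, mul_sum]
    refine sum_congr rfl fun F _ => ?_
    linear_combination (1 / (1 - t) - 1) ^ (#F - r F) *
      natCast_mul_pow_sub_one_mul (κ - r F) (1 / t - 1)
  simp_rw [hTx, hterm, mul_left_comm _ (((1 - t) / t) ^ κ / _), ← mul_sum,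
    Fintype.sum_pow_mul_eq_add_pow, add_sub_cancel, one_pow, mul_one]
  exact mul_div_cancel_left₀ _ (by simp [ht₀, ht₁])

end Tutte

theorem finrank_span_image_finset_le_card {K V ι : Type*} [DivisionRing K] [AddCommGroup V]
    [Module K V] (v : ι → V) (F : Finset ι) :
    Module.finrank K (Submodule.span K (v '' F)) ≤ #F := by
  classical
  rw [← Finset.coe_image]
  exact (finrank_span_finset_le_card _).trans card_image_le

theorem finrank_span_image_finset_mono {K V ι : Type*} [DivisionRing K] [AddCommGroup V]
    [Module K V] (v : ι → V) {F G : Finset ι} (hFG : F ⊆ G) :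
    Module.finrank K (Submodule.span K (v '' F)) ≤ Module.finrank K (Submodule.span K (v '' G)) :=
  have := FiniteDimensional.span_of_finite K (G.finite_toSet.image v)
  Submodule.finrank_mono (Submodule.span_mono (Set.image_mono (coe_subset.2 hFG)))

section Fibres

variable {X α : Type*} [Fintype α]

theorem apply_eq_sum_indicator_preimage {M : Type*} [AddCommMonoid M] (f : α → M) (g : X → α)
    (x : X) : f (g x) = ∑ a, (g ⁻¹' {a}).indicator (fun _ => f a) x := by
  rw [Finset.sum_eq_single (g x) (fun a _ ha => by simp [Ne.symm ha]) (by simp)]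
  simp

variable [MeasurableSpace X] {μ : Measure X} [IsFiniteMeasure μ] {g : X → α}

theorem integrable_comp_of_measurableSet_preimage (hg : ∀ a, MeasurableSet (g ⁻¹' {a}))
    (f : α → ℝ) : Integrable (fun x => f (g x)) μ := by
  simp_rw [apply_eq_sum_indicator_preimage f g]
  exact integrable_finsetSum _ fun a _ => (integrable_const _).indicator (hg a)

theorem integral_comp_eq_sum_measureReal_preimage (hg : ∀ a, MeasurableSet (g ⁻¹' {a}))
    (f : α → ℝ) : ∫ x, f (g x) ∂μ = ∑ a, μ.real (g ⁻¹' {a}) * f a := by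
  simp_rw [apply_eq_sum_indicator_preimage f g]
  rw [integral_finsetSum _ fun a _ => (integrable_const _).indicator (hg a)]
  simp_rw [integral_indicator_const _ (hg _), smul_eq_mul]

end Fibres

section SublevelSet

variable {E : Type*} [Fintype E]

theorem measurableSet_setOf_filter_eq {X : Type*} [MeasurableSpace X] {p : E → X → Prop}
    [∀ σ x, Decidable (p σ x)] (hp : ∀ σ, MeasurableSet {x | p σ x}) (F : Finset E) :
    MeasurableSet {x | univ.filter (fun σ => p σ x) = F} := by
  have hset : {x | univ.filter (fun σ => p σ x) = F} = ⋂ σ, {x | p σ x ↔ σ ∈ F} := by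
    ext x
    simp [Finset.ext_iff]
  rw [hset]
  refine MeasurableSet.iInter fun σ => ?_
  by_cases hσ : σ ∈ F
  · simpa [hσ] using hp σ
  · simp only [hσ, iff_false]
    exact (hp σ).compl

theorem setOf_filter_le_eq_eq_pi [DecidableEq E] {α : Type*} [LinearOrder α] (s : α)
    (F : Finset E) :
    {ω : E → α | univ.filter (fun σ => ω σ ≤ s) = F} =
      Set.univ.pi (fun σ => if σ ∈ F then Set.Iic s else Set.Ioi s) := by
  ext ω
  simp only [Set.mem_ofPred_eq, Set.mem_univ_pi, Finset.ext_iff, mem_filter, mem_univ, true_and]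
  refine forall_congr' fun σ => ?_
  by_cases hσ : σ ∈ F <;> simp [hσ]

theorem measure_pi_setOf_filter_le_eq [DecidableEq E] (ν : Measure ℝ) [SigmaFinite ν] (s : ℝ)
    (F : Finset E) :
    Measure.pi (fun _ : E => ν) {ω | univ.filter (fun σ => ω σ ≤ s) = F} =
      ν (Set.Iic s) ^ #F * ν (Set.Ioi s) ^ (Fintype.card E - #F) := by
  rw [setOf_filter_le_eq_eq_pi, Measure.pi_pi]
  simp [apply_ite ν, Finset.prod_ite, Finset.filter_not, card_univ_sdiff]

theorem integral_comp_filter_le (f : Finset E → ℝ) {s : ℝ} (hs₀ : 0 ≤ s) (hs₁ : s ≤ 1) :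
    ∫ ω, f (univ.filter fun σ => ω σ ≤ s)
        ∂(Measure.pi fun _ : E => volume.restrict (Set.Icc (0 : ℝ) 1)) =
      ∑ F, f F * (s ^ #F * (1 - s) ^ (Fintype.card E - #F)) := by
  classical
  have hIic : volume.restrict (Set.Icc (0 : ℝ) 1) (Set.Iic s) = ENNReal.ofReal s := by
    have hset : Set.Iic s ∩ Set.Icc 0 1 = Set.Icc 0 s := by
      ext x
      simp only [Set.mem_inter_iff, Set.mem_Iic, Set.mem_Icc]
      grind
    rw [Measure.restrict_apply measurableSet_Iic, hset, Real.volume_Icc, sub_zero]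
  have hIoi : volume.restrict (Set.Icc (0 : ℝ) 1) (Set.Ioi s) = ENNReal.ofReal (1 - s) := by
    have hset : Set.Ioi s ∩ Set.Icc 0 1 = Set.Ioc s 1 := by
      ext x
      simp only [Set.mem_inter_iff, Set.mem_Ioi, Set.mem_Icc, Set.mem_Ioc]
      grind
    rw [Measure.restrict_apply measurableSet_Ioi, hset, Real.volume_Ioc]
  rw [integral_comp_eq_sum_measureReal_preimage
    (g := fun ω : E → ℝ => univ.filter fun σ => ω σ ≤ s)
    (measurableSet_setOf_filter_eq fun σ =>
      measurableSet_le (measurable_pi_apply σ) measurable_const)]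
  refine sum_congr rfl fun F _ => ?_
  simp only [measureReal_def, Set.preimage, Set.mem_singleton_iff]
  rw [measure_pi_setOf_filter_le_eq, hIic, hIoi, ← ENNReal.ofReal_pow hs₀,
    ← ENNReal.ofReal_pow (sub_nonneg.2 hs₁), ← ENNReal.ofReal_mul (by positivity),
    ENNReal.toReal_ofReal (by positivity), mul_comm]

theorem integral_intervalIntegral_comp_filter_le (f : Finset E → ℝ) :
    ∫ ω, (∫ s in (0 : ℝ)..1, f (univ.filter fun σ => ω σ ≤ s))
        ∂(Measure.pi fun _ : E => volume.restrict (Set.Icc (0 : ℝ) 1)) =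
      ∫ s in (0 : ℝ)..1, ∑ F, f F * (s ^ #F * (1 - s) ^ (Fintype.card E - #F)) := by
  have hint : Integrable (fun z : (E → ℝ) × ℝ => f (univ.filter fun σ => z.1 σ ≤ z.2))
      ((Measure.pi fun _ : E => volume.restrict (Set.Icc (0 : ℝ) 1)).prod
        (volume.restrict (Set.Ioc 0 1))) :=
    integrable_comp_of_measurableSet_preimage (measurableSet_setOf_filter_eq fun σ =>
      measurableSet_le ((measurable_pi_apply σ).comp measurable_fst) measurable_snd) f
  simp_rw [intervalIntegral.integral_of_le zero_le_one]
  rw [integral_integral_swap hint]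
  exact setIntegral_congr_fun measurableSet_Ioc fun s hs =>
    integral_comp_filter_le f hs.1.le hs.2

end SublevelSet

theorem stmt_8_general {K : Type*} [Field K] {E : Type*} [Fintype E] [DecidableEq E]
    {V : Type*} [AddCommGroup V] [Module K V]
    (bdry : (E → K) →ₗ[K] V)
    (r : Finset E → ℕ)
    (hr : ∀ F : Finset E, r F = Module.finrank K (Submodule.span K
      ((fun σ => bdry (Pi.single σ 1)) '' (F : Set E))))
    (κ : ℕ) (hκ : r Finset.univ ≤ κ)
    (T Tx : ℝ → ℝ → ℝ)
    (hT : ∀ x y : ℝ, T x y =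
      ∑ F : Finset E, (x - 1) ^ (κ - r F) * (y - 1) ^ (F.card - r F))
    (hTx : ∀ x y : ℝ, Tx x y =
      ∑ F : Finset E,
        (κ - r F : ℕ) * (x - 1) ^ (κ - r F - 1) * (y - 1) ^ (F.card - r F))
    (L : (E → ℝ) → ℝ)
    (hL : ∀ ω : E → ℝ, L ω =
      ∫ s in (0 : ℝ)..1,
        ((κ : ℝ) - (r (Finset.univ.filter fun σ => ω σ ≤ s) : ℕ))) :
    (∫ ω : E → ℝ, L ω
        ∂(Measure.pi fun _ : E => volume.restrict (Set.Icc (0 : ℝ) 1))) =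
      ∫ t in (0 : ℝ)..1,
        (1 - t) / t * Tx (1 / t) (1 / (1 - t)) / T (1 / t) (1 / (1 - t)) := by
  have hrκ (F : Finset E) : r F ≤ κ := by
    rw [hr F]
    exact (finrank_span_image_finset_mono _ (subset_univ F)).trans (hr univ ▸ hκ)
  have hrc (F : Finset E) : r F ≤ #F := by
    rw [hr F]
    exact finrank_span_image_finset_le_card _ F
  simp_rw [hL, hT, hTx]
  rw [integral_intervalIntegral_comp_filter_le fun F => (κ : ℝ) - r F]
  refine intervalIntegral.integral_congr_ae ?_
  filter_upwards [volume.ae_ne 1] with t ht₁ ht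
  rw [Set.uIoc_of_le zero_le_one] at ht
  rw [tutte_ratio_eq_sum r κ hrκ hrc ht.1.ne' (sub_ne_zero.2 ht₁.symm)]
  exact sum_congr rfl fun F _ => by rw [Nat.cast_sub (hrκ F)]

/-- The expected lifetime sum of the `(ℓ-1)`-st reduced persistent homology of
the `ℓ`-Bernoulli cell complex process equals
`∫₀¹ ((1-t)/t) Tₓ(1/t, 1/(1-t)) / T(1/t, 1/(1-t)) dt`. -/
theorem stmt_8 {K : Type*} [Field K] {E : Type*} [Fintype E] [DecidableEq E]
    {V : Type*} [AddCommGroup V] [Module K V] [FiniteDimensional K V]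
    (bdry : (E → K) →ₗ[K] V)
    (r : Finset E → ℕ)
    (hr : ∀ F : Finset E, r F = Module.finrank K (Submodule.span K
      ((fun σ => bdry (Pi.single σ 1)) '' (F : Set E))))
    (κ : ℕ) (hκ : r Finset.univ ≤ κ)
    (T Tx : ℝ → ℝ → ℝ)
    (hT : ∀ x y : ℝ, T x y =
      ∑ F : Finset E, (x - 1) ^ (κ - r F) * (y - 1) ^ (F.card - r F))
    (hTx : ∀ x y : ℝ, Tx x y =
      ∑ F : Finset E,
        (κ - r F : ℕ) * (x - 1) ^ (κ - r F - 1) * (y - 1) ^ (F.card - r F))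
    (L : (E → ℝ) → ℝ)
    (hL : ∀ ω : E → ℝ, L ω =
      ∫ s in (0 : ℝ)..1,
        ((κ : ℝ) - (r (Finset.univ.filter fun σ => ω σ ≤ s) : ℕ))) :
    (∫ ω : E → ℝ, L ω
        ∂(Measure.pi fun _ : E => volume.restrict (Set.Icc (0 : ℝ) 1))) =
      ∫ t in (0 : ℝ)..1,
        (1 - t) / t * Tx (1 / t) (1 / (1 - t)) / T (1 / t) (1 / (1 - t)) :=
  stmt_8_general bdry r hr κ hκ T Tx hT hTx L hL
end

section
/- For every p ∈ (0,1) and every real q ≥ 1, the ℓ-random-cluster measure μ_{p,q} on X is positively associated: for any two functions f, g : {F : F ⊆ E} → ℝ that are increasing with respect to inclusion (Y ⊆ Y' implies f(Y) ≤ f(Y') and g(Y) ≤ g(Y')), one has Σ_F μ_{p,q}(F)·f(F)·g(F) ≥ (Σ_F μ_{p,q}(F)·f(F))·(Σ_F μ_{p,q}(F)·g(F)). -/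
/-!
The weight `w F = p ^ |F| (1 - p) ^ |E \ F| q ^ (κ - r F)` satisfies the FKG lattice condition
`w A w B ≤ w (A ∩ B) w (A ∪ B)`: the Bernoulli factor is modular in `F`, and the factor
`q ^ (κ - r F)` is log-supermodular because `q ≥ 1` and the rank `r F` of the boundary vectors is
monotone and submodular (Grassmann's formula). The FKG inequality then gives positive association.
-/

open Finset

section FKG

variable {α β : Type*} [DistribLattice α] [OrderBot α] [Fintype α]
  [CommRing β] [LinearOrder β] [IsStrictOrderedRing β]

/-- Adding a constant to `f` or `g` changes both sides by the same amount, so shifting by `f ⊥`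
and `g ⊥` reduces this to `fkg` for nonnegative functions. -/
lemma fkg_of_orderBot {μ f g : α → β} (hμ₀ : 0 ≤ μ) (hf : Monotone f) (hg : Monotone g)
    (hμ : ∀ a b, μ a * μ b ≤ μ (a ⊓ b) * μ (a ⊔ b)) :
    (∑ a, μ a * f a) * ∑ a, μ a * g a ≤ (∑ a, μ a) * ∑ a, μ a * (f a * g a) := by
  have key := fkg (fun a => f a - f ⊥) (fun a => g a - g ⊥) μ hμ₀
    (fun a => sub_nonneg.2 (hf bot_le)) (fun a => sub_nonneg.2 (hg bot_le))
    (fun a b h => sub_le_sub_right (hf h) _) (fun a b h => sub_le_sub_right (hg h) _) hμ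
  simp only [mul_sub, sub_mul, sum_sub_distrib, mul_left_comm (μ _) (f ⊥),
    ← mul_assoc (μ _) _ (g ⊥), ← sum_mul, ← mul_sum] at key
  linear_combination key

end FKG

lemma pow_card_mul_pow_card {α M : Type*} [DecidableEq α] [CommMonoid M] (x : M)
    (s t : Finset α) : x ^ #s * x ^ #t = x ^ #(s ∩ t) * x ^ #(s ∪ t) := by
  rw [← pow_add, ← pow_add, card_inter_add_card_union]

lemma pow_tsub_mul_pow_tsub_le {α R : Type*} [Lattice α] [CommSemiring R] [PartialOrder R]
    [IsOrderedRing R] {q : R} (hq : 1 ≤ q) (κ : ℕ) {r : α → ℕ} (hr : Monotone r)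
    (hsub : ∀ a b, r (a ⊔ b) + r (a ⊓ b) ≤ r a + r b) (a b : α) :
    q ^ (κ - r a) * q ^ (κ - r b) ≤ q ^ (κ - r (a ⊓ b)) * q ^ (κ - r (a ⊔ b)) := by
  rw [← pow_add, ← pow_add]
  refine pow_le_pow_right₀ hq ?_
  have := hsub a b
  have := hr (inf_le_left : a ⊓ b ≤ a)
  have := hr (inf_le_right : a ⊓ b ≤ b)
  have := hr (le_sup_left : a ≤ a ⊔ b)
  have := hr (le_sup_right : b ≤ a ⊔ b)
  omega

section Rank

variable {K ι V : Type*} [Field K] [AddCommGroup V] [Module K V] [FiniteDimensional K V]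

lemma finrank_span_image_mono (φ : ι → V) :
    Monotone fun s : Set ι => Module.finrank K (Submodule.span K (φ '' s)) :=
  fun _ _ h => Submodule.finrank_mono (Submodule.span_mono (Set.image_mono h))

lemma finrank_span_image_union_add_inter_le (φ : ι → V) (s t : Set ι) :
    Module.finrank K (Submodule.span K (φ '' (s ∪ t))) +
        Module.finrank K (Submodule.span K (φ '' (s ∩ t))) ≤
      Module.finrank K (Submodule.span K (φ '' s)) +
        Module.finrank K (Submodule.span K (φ '' t)) := by
  rw [← Submodule.finrank_sup_add_finrank_inf_eq (Submodule.span K (φ '' s)),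
    Set.image_union, Submodule.span_union]
  exact Nat.add_le_add_left (Submodule.finrank_mono (le_inf
    (Submodule.span_mono (Set.image_mono Set.inter_subset_left))
    (Submodule.span_mono (Set.image_mono Set.inter_subset_right)))) _

end Rank

section RandomCluster

variable {E : Type*} [Fintype E] [DecidableEq E]

def randomClusterWeight (p q : ℝ) (κ : ℕ) (r : Finset E → ℕ) (F : Finset E) : ℝ :=
  p ^ #F * (1 - p) ^ #Fᶜ * q ^ (κ - r F)

lemma randomClusterWeight_pos {p q : ℝ} (hp : p ∈ Set.Ioo (0 : ℝ) 1) (hq : 0 < q) (κ : ℕ)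
    (r : Finset E → ℕ) (F : Finset E) : 0 < randomClusterWeight p q κ r F := by
  obtain ⟨hp₀, hp₁⟩ := hp
  have := sub_pos.2 hp₁
  unfold randomClusterWeight
  positivity

lemma randomClusterWeight_mul_le {p q : ℝ} (hp₀ : 0 ≤ p) (hp₁ : p ≤ 1) (hq : 1 ≤ q) (κ : ℕ)
    {r : Finset E → ℕ} (hr : Monotone r) (hsub : ∀ a b, r (a ∪ b) + r (a ∩ b) ≤ r a + r b) (a b : Finset E) :
    randomClusterWeight p q κ r a * randomClusterWeight p q κ r b ≤
      randomClusterWeight p q κ r (a ∩ b) * randomClusterWeight p q κ r (a ∪ b) := by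
  have hp := pow_card_mul_pow_card p a b
  have hp' := pow_card_mul_pow_card (1 - p) aᶜ bᶜ
  rw [← compl_union, ← compl_inter, mul_comm (_ ^ #(a ∪ b)ᶜ)] at hp'
  have hq' := pow_tsub_mul_pow_tsub_le hq κ hr hsub a b
  unfold randomClusterWeight
  calc _ = (p ^ #a * p ^ #b) * ((1 - p) ^ #aᶜ * (1 - p) ^ #bᶜ) *
        (q ^ (κ - r a) * q ^ (κ - r b)) := by ring
    _ ≤ (p ^ #(a ∩ b) * p ^ #(a ∪ b)) *
        ((1 - p) ^ #(a ∩ b)ᶜ * (1 - p) ^ #(a ∪ b)ᶜ) *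
        (q ^ (κ - r (a ∩ b)) * q ^ (κ - r (a ∪ b))) := by
      rw [hp, hp']
      exact mul_le_mul_of_nonneg_left hq' (by have := sub_nonneg.2 hp₁; positivity)
    _ = _ := by ring

end RandomCluster

theorem stmt_12_general {K : Type*} [Field K] {E : Type*} [Fintype E] [DecidableEq E]
    {V : Type*} [AddCommGroup V] [Module K V] [FiniteDimensional K V]
    (bdry : (E → K) →ₗ[K] V)
    (r : Finset E → ℕ)
    (hr : ∀ F : Finset E, r F = Module.finrank K (Submodule.span K
      ((fun σ => bdry (Pi.single σ 1)) '' (F : Set E))))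
    (κ : ℕ)
    (p q : ℝ) (hp : p ∈ Set.Ioo (0 : ℝ) 1) (hq : 1 ≤ q)
    (w : Finset E → ℝ)
    (hw : ∀ F : Finset E,
      w F = p ^ F.card * (1 - p) ^ (Fintype.card E - F.card) * q ^ (κ - r F))
    (Z : ℝ) (hZ : Z = ∑ F : Finset E, w F)
    (μ : Finset E → ℝ) (hμ : ∀ F : Finset E, μ F = w F / Z)
    (f g : Finset E → ℝ)
    (hf : ∀ Y Y' : Finset E, Y ⊆ Y' → f Y ≤ f Y')
    (hg : ∀ Y Y' : Finset E, Y ⊆ Y' → g Y ≤ g Y') :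
    (∑ F : Finset E, μ F * f F) * (∑ F : Finset E, μ F * g F) ≤
      ∑ F : Finset E, μ F * (f F * g F) := by
  have hw' : w = randomClusterWeight p q κ r := funext fun F => by
    rw [hw, randomClusterWeight, card_compl]
  have hr_mono : Monotone r := fun F G h => by
    simp only [hr]
    exact finrank_span_image_mono _ (coe_subset.2 h)
  have hr_sub : ∀ a b, r (a ∪ b) + r (a ∩ b) ≤ r a + r b := fun a b => by
    rw [hr, hr, hr, hr, coe_union, coe_inter]
    exact finrank_span_image_union_add_inter_le _ _ _
  have hw_pos : ∀ F, 0 < w F := fun F =>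
    hw' ▸ randomClusterWeight_pos hp (zero_lt_one.trans_le hq) κ r F
  have hZ_pos : 0 < Z := hZ ▸ sum_pos (fun F _ => hw_pos F) univ_nonempty
  have hμ_sum : ∑ F, μ F = 1 := by
    simp only [hμ, ← sum_div, ← hZ, div_self hZ_pos.ne']
  have hμ_mul : ∀ a b, μ a * μ b ≤ μ (a ⊓ b) * μ (a ⊔ b) := fun a b => by
    rw [hμ, hμ, hμ, hμ, div_mul_div_comm, div_mul_div_comm, hw']
    exact div_le_div_of_nonneg_right
      (randomClusterWeight_mul_le hp.1.le hp.2.le hq κ hr_mono hr_sub a b) (mul_self_nonneg Z)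
  simpa only [hμ_sum, one_mul] using
    fkg_of_orderBot (fun F => (hμ F).symm ▸ div_nonneg (hw_pos F).le hZ_pos.le)
      (fun _ _ => hf _ _) (fun _ _ => hg _ _) hμ_mul

/-- Positive association of the `ℓ`-random-cluster measure: for `p ∈ (0,1)`,
`q ≥ 1`, and any two inclusion-increasing functions `f, g : Finset E → ℝ`,
`μ_{p,q}(fg) ≥ μ_{p,q}(f) μ_{p,q}(g)`. -/
theorem stmt_12 {K : Type*} [Field K] {E : Type*} [Fintype E] [DecidableEq E]
    {V : Type*} [AddCommGroup V] [Module K V] [FiniteDimensional K V]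
    (bdry : (E → K) →ₗ[K] V)
    (r : Finset E → ℕ)
    (hr : ∀ F : Finset E, r F = Module.finrank K (Submodule.span K
      ((fun σ => bdry (Pi.single σ 1)) '' (F : Set E))))
    (κ : ℕ) (hκ : r Finset.univ ≤ κ)
    (p q : ℝ) (hp : p ∈ Set.Ioo (0 : ℝ) 1) (hq : 1 ≤ q)
    (w : Finset E → ℝ)
    (hw : ∀ F : Finset E,
      w F = p ^ F.card * (1 - p) ^ (Fintype.card E - F.card) * q ^ (κ - r F))
    (Z : ℝ) (hZ : Z = ∑ F : Finset E, w F)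
    (μ : Finset E → ℝ) (hμ : ∀ F : Finset E, μ F = w F / Z)
    (f g : Finset E → ℝ)
    (hf : ∀ Y Y' : Finset E, Y ⊆ Y' → f Y ≤ f Y')
    (hg : ∀ Y Y' : Finset E, Y ⊆ Y' → g Y ≤ g Y') :
    (∑ F : Finset E, μ F * f F) * (∑ F : Finset E, μ F * g F) ≤
      ∑ F : Finset E, μ F * (f F * g F) :=
  stmt_12_general bdry r hr κ p q hp hq w hw Z hZ μ hμ f g hf hg
end

section
/- For every p ∈ (0,1) and every real q > 0, the normalizing constant of the ℓ-random-cluster model satisfies Z_{p,q} = Σ_{Y ⊆ E} p^{|Y|}·(1−p)^{|E|−|Y|}·q^{κ−r(Y)} = (p/(1−p))^{κ−r(E)} · p^{r(E)} · (1−p)^{|E|−r(E)} · T(1 + q(1−p)/p, 1/(1−p)). -/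
open Finset Module Submodule

/-! Under the substitution `x - 1 = q(1-p)/p`, `y - 1 = p/(1-p)` the prefactor times the
`F`-summand of `T` is exactly the random-cluster weight of `F`: the powers of `p` and `1 - p`
telescope to `p^|F| (1-p)^(|E|-|F|)`. The natural-number exponents may be split because
`r F ≤ |F|` and `r F ≤ r E ≤ κ`. -/

section SpanRank

variable {K V ι : Type*} [DivisionRing K] [AddCommGroup V] [Module K V] (v : ι → V)

theorem finrank_span_image_finset_le_card_s13 (F : Finset ι) :
    (v '' F).finrank K ≤ F.card := by
  classical
  rw [← coe_image]
  exact (finrank_span_finset_le_card _).trans card_image_le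

theorem finrank_span_image_mono_s13 {F G : Set ι} (hG : G.Finite) (hFG : F ⊆ G) :
    (v '' F).finrank K ≤ (v '' G).finrank K :=
  have : Module.Finite K (span K (v '' G)) := Module.Finite.span_of_finite K (hG.image v)
  Submodule.finrank_mono (span_mono (Set.image_mono hFG))

end SpanRank

theorem random_cluster_weight_eq_tutte_term {𝕜 : Type*} [Field 𝕜] {p : 𝕜} (q : 𝕜)
    (hp : p ≠ 0) (hp' : 1 - p ≠ 0) {n c s t κ : ℕ}
    (hsc : s ≤ c) (hcn : c ≤ n) (hsκ : s ≤ κ) (htκ : t ≤ κ) (htn : t ≤ n) :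
    p ^ c * (1 - p) ^ (n - c) * q ^ (κ - s) =
      (p / (1 - p)) ^ (κ - t) * p ^ t * (1 - p) ^ (n - t) *
        ((q * (1 - p) / p) ^ (κ - s) * (p / (1 - p)) ^ (c - s)) := by
  rw [div_pow, div_pow, div_pow, mul_pow, pow_sub₀ _ hp' hcn, pow_sub₀ _ hp htκ,
    pow_sub₀ _ hp' htκ, pow_sub₀ _ hp' htn, pow_sub₀ _ hp' hsκ, pow_sub₀ _ hp hsκ,
    pow_sub₀ _ hp hsc, pow_sub₀ _ hp' hsc]
  field_simp

theorem stmt_13_general {K : Type*} [Field K] {E : Type*} [Fintype E] [DecidableEq E]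
    {V : Type*} [AddCommGroup V] [Module K V]
    (bdry : (E → K) →ₗ[K] V)
    (r : Finset E → ℕ)
    (hr : ∀ F : Finset E, r F = Module.finrank K (Submodule.span K
      ((fun σ => bdry (Pi.single σ 1)) '' (F : Set E))))
    (κ : ℕ) (hκ : r Finset.univ ≤ κ)
    (T : ℝ → ℝ → ℝ)
    (hT : ∀ x y : ℝ, T x y =
      ∑ F : Finset E, (x - 1) ^ (κ - r F) * (y - 1) ^ (F.card - r F))
    (p q : ℝ) (hp : p ∈ Set.Ioo (0 : ℝ) 1) :
    ∑ Y : Finset E,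
        p ^ Y.card * (1 - p) ^ (Fintype.card E - Y.card) * q ^ (κ - r Y) =
      (p / (1 - p)) ^ (κ - r Finset.univ) * p ^ r Finset.univ *
        (1 - p) ^ (Fintype.card E - r Finset.univ) *
        T (1 + q * (1 - p) / p) (1 / (1 - p)) := by
  obtain ⟨hp0, hp1⟩ := hp
  have hp' : 1 - p ≠ 0 := by linarith
  have hr_card (F : Finset E) : r F ≤ F.card := hr F ▸ finrank_span_image_finset_le_card_s13 _ F
  have hr_mono (F : Finset E) : r F ≤ r univ := by
    rw [hr, hr]
    exact finrank_span_image_mono_s13 _ (Set.toFinite _) (subset_univ F)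
  rw [hT, mul_sum]
  refine sum_congr rfl fun F _ => ?_
  have hy : 1 / (1 - p) - 1 = p / (1 - p) := by field_simp; ring
  rw [add_sub_cancel_left, hy]
  exact random_cluster_weight_eq_tutte_term q hp0.ne' hp' (hr_card F)
    (card_le_univ F) ((hr_mono F).trans hκ) hκ (card_univ (α := E) ▸ hr_card univ)

/-- The partition function of the `ℓ`-random-cluster model is expressed through
the (non-reduced) `ℓ`-Tutte polynomial:
`Z_{p,q} = (p/(1-p))^{κ-r(E)} p^{r(E)} (1-p)^{|E|-r(E)}
  T(1 + q(1-p)/p, 1/(1-p))`. -/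
theorem stmt_13 {K : Type*} [Field K] {E : Type*} [Fintype E] [DecidableEq E]
    {V : Type*} [AddCommGroup V] [Module K V] [FiniteDimensional K V]
    (bdry : (E → K) →ₗ[K] V)
    (r : Finset E → ℕ)
    (hr : ∀ F : Finset E, r F = Module.finrank K (Submodule.span K
      ((fun σ => bdry (Pi.single σ 1)) '' (F : Set E))))
    (κ : ℕ) (hκ : r Finset.univ ≤ κ)
    (T : ℝ → ℝ → ℝ)
    (hT : ∀ x y : ℝ, T x y =
      ∑ F : Finset E, (x - 1) ^ (κ - r F) * (y - 1) ^ (F.card - r F))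
    (p q : ℝ) (hp : p ∈ Set.Ioo (0 : ℝ) 1) (hq : 0 < q) :
    ∑ Y : Finset E,
        p ^ Y.card * (1 - p) ^ (Fintype.card E - Y.card) * q ^ (κ - r Y) =
      (p / (1 - p)) ^ (κ - r Finset.univ) * p ^ r Finset.univ *
        (1 - p) ^ (Fintype.card E - r Finset.univ) *
        T (1 + q * (1 - p) / p) (1 / (1 - p)) :=
  stmt_13_general bdry r hr κ hκ T hT p q hp
end
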